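/- Suppose 𝕋ⁿ = ℝ^{m×n}, f is implementable and satisfies non-imposition. For all pairwise distinct a, b, c ∈ A: if β ∈ P^f(a,b) and α ∈ P^f(b,c), then (β + α) ∈ P^f(a,c). -/

import Mathlib

/-
Two alternatives cannot lie in choice sets whose differences are strictly ordered: if
`x ∈ C(t)`, `y ∈ C(r)` and `t^x - t^y ≪ r^x - r^y`, there is a single profile that improves
on `t` from `x`'s point of view and on `r` from `y`'s, so `f` would have to choose both.

Let `t` witness `β ∈ P(a,b)`, `s` witness `α ∈ P(b,c)` and `f u = a`. In the profile `q_δ` with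
columns `β + α + 2δ`, `α + δ`, `0` at `a, b, c` and every other column placed so that `a` leads
it by `u`'s margin plus `2δ`, the alternative chosen can be neither `b` (compare with `t`),
nor `c` (compare with `s`), nor any other (compare with `u`). So `f(q_δ) = a` for all `δ ≫ 0`,
whence `a ∈ C(q_0)`, and `q_0^a - q_0^c = β + α`.
-/

open Function

/-- A type profile: column `t a` is the utility vector in `ℝⁿ` for alternative `a`;
agent `i`'s type (row) is `fun a => t a i`.  The domain is unrestricted: `𝕋ⁿ = ℝ^{m×n}`. -/
abbrev Profile (n : ℕ) (A : Type*) := A → Fin n → ℝ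

/-- Payment rule `p` implements `f` in dominant strategies:
no agent `i` can gain by a unilateral deviation (a change of his own row only). -/
def Implements {n : ℕ} {A : Type*} (f : Profile n A → A)
    (p : Profile n A → Fin n → ℝ) : Prop :=
  ∀ t s : Profile n A, ∀ i : Fin n,
    (∀ j : Fin n, j ≠ i → ∀ a : A, s a j = t a j) →
    t (f t) i + p t i ≥ t (f s) i + p s i

/-- `f` is implementable in dominant strategies. -/
def Implementable {n : ℕ} {A : Type*} (f : Profile n A → A) : Prop :=
  ∃ p, Implements f p

/-- The choice set `C^f(t)`: alternatives `a` such that raising the column of `a`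
by any strictly positive `ε` makes `f` choose `a`. -/
def ChoiceSet {n : ℕ} {A : Type*} [DecidableEq A]
    (f : Profile n A → A) (t : Profile n A) : Set A :=
  {a | ∀ ε : Fin n → ℝ, (∀ i, 0 < ε i) →
    f (Function.update t a (t a + ε)) = a}

/-- `f` is neutral: permuting the columns of a profile permutes the choice set
accordingly (the profile `s` induced by `ρ` has `s^{ρ a} = t^a`, i.e. `s b = t (ρ⁻¹ b)`). -/
def Neutral {n : ℕ} {A : Type*} [DecidableEq A] (f : Profile n A → A) : Prop :=
  ∀ t : Profile n A, ∀ ρ : Equiv.Perm A,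
    ChoiceSet f (fun b => t (ρ.symm b)) = ρ '' ChoiceSet f t

/-- `f` satisfies non-imposition: every alternative is chosen at some profile. -/
def NonImposition {n : ℕ} {A : Type*} (f : Profile n A → A) : Prop :=
  ∀ a : A, ∃ t : Profile n A, f t = a

/-- The `P`-set of the pair `(a,b)`. -/
def RPSet {n : ℕ} {A : Type*} [DecidableEq A] (f : Profile n A → A) (a b : A) :
    Set (Fin n → ℝ) :=
  {α | ∃ t : Profile n A, a ∈ ChoiceSet f t ∧ t a - t b = α}

/-- The profile `1^a_ε`: column `a` equals the constant vector `ε·𝟙`, all other columns are `0`. -/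
def OneProf {n : ℕ} {A : Type*} [DecidableEq A] (a : A) (ε : ℝ) : Profile n A :=
  fun b => if b = a then (fun _ => ε) else 0

namespace Implements

variable {n : ℕ} {A : Type*} {f : Profile n A → A} {p : Profile n A → Fin n → ℝ}

theorem weak_monotonicity (hp : Implements f p) {t s : Profile n A} {i : Fin n}
    (h : ∀ j, j ≠ i → ∀ a, s a j = t a j) :
    t (f s) i - t (f t) i ≤ s (f s) i - s (f t) i := by
  have hts := hp t s i h
  have hst := hp s t i fun j hj a => (h j hj a).symm
  linarith

theorem apply_eq_of_forall_strongLT (hp : Implements f p) {t s : Profile n A} {x : A}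
    (hx : f t = x) (h : ∀ y, y ≠ x → StrongLT (t x - t y) (s x - s y)) :
    f s = x := by
  let hybrid : Finset (Fin n) → Profile n A := fun S z i => if i ∈ S then s z i else t z i
  suffices ∀ S, f (hybrid S) = x by simpa [hybrid] using this Finset.univ
  intro S
  induction S using Finset.induction_on with
  | empty => simpa [hybrid] using hx
  | @insert j S hjS ih =>
    by_contra hne
    have hmono := hp.weak_monotonicity (t := hybrid S) (s := hybrid (insert j S)) (i := j)
      fun k hkj z => by simp [hybrid, hkj]
    have hlt := h _ hne j
    simp only [ih, hybrid, Finset.mem_insert_self, if_true, hjS, if_false] at hmono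
    simp only [Pi.sub_apply] at hlt
    linarith

variable [DecidableEq A]

theorem apply_mem_choiceSet (hp : Implements f p) (t : Profile n A) : f t ∈ ChoiceSet f t := by
  intro ε hε
  refine hp.apply_eq_of_forall_strongLT rfl fun y hy i => ?_
  simp [update_of_ne hy, hε i]

theorem apply_eq_of_mem_choiceSet (hp : Implements f p) {t s : Profile n A} {x : A}
    (hx : x ∈ ChoiceSet f t) {ε : Fin n → ℝ} (hε : StrongLT 0 ε)
    (h : ∀ z, z ≠ x → t x - t z + ε ≤ s x - s z) : f s = x := by
  refine hp.apply_eq_of_forall_strongLT (hx (ε / 2) fun i => half_pos (hε i))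
    fun z hz i => ?_
  have hεi : 0 < ε i := hε i
  have hzi := h z hz i
  simp only [update_self, update_of_ne hz, Pi.sub_apply, Pi.add_apply, Pi.div_apply,
    Pi.ofNat_apply] at hzi ⊢
  linarith

theorem not_strongLT_of_mem_choiceSet (hp : Implements f p) {x y : A} (hxy : x ≠ y)
    {t r : Profile n A} (hx : x ∈ ChoiceSet f t) (hy : y ∈ ChoiceSet f r) :
    ¬ StrongLT (t x - t y) (r x - r y) := by
  intro hlt
  set ε := r x - r y - (t x - t y)
  have hε : StrongLT 0 ε := fun i => sub_pos.2 (hlt i)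
  -- `x`'s advantages in `P` exceed those in `t`, and `y`'s exceed those in `r`, by `ε / 2`.
  let P : Profile n A := fun z =>
    if z = x then t x - t y + ε / 2 else if z = y then 0 else (t z - t y) ⊓ (r z - r y - ε / 2)
  have hPx : f P = x := hp.apply_eq_of_mem_choiceSet hx (ε := ε / 2) (fun i => half_pos (hε i))
    fun z hzx i => by
      by_cases hzy : z = y
      · simp [P, hzy, hxy.symm]
      · have := inf_le_left (a := t z i - t y i) (b := r z i - r y i - ε i / 2)
        simp only [P, hzx, hzy, if_true, if_false, Pi.add_apply, Pi.sub_apply,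
          Pi.div_apply, Pi.ofNat_apply, Pi.inf_apply] at this ⊢
        linarith
  have hPy : f P = y := hp.apply_eq_of_mem_choiceSet hy (ε := ε / 2) (fun i => half_pos (hε i))
    fun z hzy i => by
      by_cases hzx : z = x
      · simp only [P, hzx, hxy.symm, if_true, if_false, Pi.add_apply, Pi.sub_apply,
          Pi.div_apply, Pi.ofNat_apply, ε]
        linarith
      · have := inf_le_right (a := t z i - t y i) (b := r z i - r y i - ε i / 2)
        simp only [P, hzx, hzy, hxy.symm, if_true, if_false, Pi.add_apply, Pi.sub_apply,
          Pi.div_apply, Pi.ofNat_apply, Pi.inf_apply] at this ⊢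
        linarith
  exact hxy (hPx.symm.trans hPy)

theorem mem_choiceSet_of_forall_apply_eq (hp : Implements f p) {t : Profile n A} {x : A}
    (h : ∀ ε : Fin n → ℝ, StrongLT 0 ε →
      ∃ s : Profile n A, f s = x ∧ ∀ y, y ≠ x → StrongLT (s x - s y) (t x - t y + ε)) :
    x ∈ ChoiceSet f t := by
  intro ε hε
  obtain ⟨s, hsx, hs⟩ := h ε hε
  refine hp.apply_eq_of_forall_strongLT hsx fun y hy i => ?_
  simpa only [update_self, update_of_ne hy, Pi.sub_apply, Pi.add_apply, add_sub_right_comm]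
    using hs y hy i

end Implements

section ChainProfile

variable {n : ℕ} {A : Type*} [DecidableEq A] (a b c : A) (β α : Fin n → ℝ) (u : Profile n A)

/-- Outside `a, b, c`, the columns are placed so that `a` leads them by exactly `u`'s margins
plus `2 • δ`. -/
def chainProfile (δ : Fin n → ℝ) : Profile n A := fun y =>
  if y = a then β + α + 2 • δ else if y = b then α + δ else if y = c then 0
  else β + α + (u y - u a)

variable {a b c} (δ : Fin n → ℝ)

theorem chainProfile_sub_chainProfile_left (hab : a ≠ b) :
    chainProfile a b c β α u δ a - chainProfile a b c β α u δ b = β + δ := by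
  simp only [chainProfile, hab.symm, if_true, if_false]
  abel

theorem chainProfile_sub_chainProfile_right (hab : a ≠ b) (hbc : b ≠ c) (hac : a ≠ c) :
    chainProfile a b c β α u δ b - chainProfile a b c β α u δ c = α + δ := by
  simp [chainProfile, hab.symm, hac.symm, hbc.symm]

theorem chainProfile_sub_chainProfile_outer (hac : a ≠ c) (hbc : b ≠ c) :
    chainProfile a b c β α u δ a - chainProfile a b c β α u δ c = β + α + 2 • δ := by
  simp [chainProfile, hac.symm, hbc.symm]

theorem chainProfile_sub_chainProfile_of_ne {y : A} (hya : y ≠ a) (hyb : y ≠ b) (hyc : y ≠ c) :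
    chainProfile a b c β α u δ a - chainProfile a b c β α u δ y = u a - u y + 2 • δ := by
  simp only [chainProfile, hya, hyb, hyc, if_true, if_false]
  abel

theorem chainProfile_sub_chainProfile_lt (hab : a ≠ b) (hbc : b ≠ c) (hac : a ≠ c)
    {ε : Fin n → ℝ} (hε : StrongLT 0 ε) {y : A} (hya : y ≠ a) :
    StrongLT (chainProfile a b c β α u (ε / 3) a - chainProfile a b c β α u (ε / 3) y)
      (chainProfile a b c β α u 0 a - chainProfile a b c β α u 0 y + ε) := by
  have hεi (i : Fin n) : 0 < ε i := hε i
  by_cases hyb : y = b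
  · subst hyb
    rw [chainProfile_sub_chainProfile_left β α u _ hab,
      chainProfile_sub_chainProfile_left β α u _ hab]
    intro i
    simp only [Pi.add_apply, Pi.div_apply, Pi.ofNat_apply]
    linarith [hεi i]
  by_cases hyc : y = c
  · subst hyc
    rw [chainProfile_sub_chainProfile_outer β α u _ hac hbc,
      chainProfile_sub_chainProfile_outer β α u _ hac hbc]
    intro i
    simp only [Pi.add_apply, Pi.div_apply, Pi.ofNat_apply, two_nsmul]
    linarith [hεi i]
  · rw [chainProfile_sub_chainProfile_of_ne β α u _ hya hyb hyc,
      chainProfile_sub_chainProfile_of_ne β α u _ hya hyb hyc]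
    intro i
    simp only [Pi.add_apply, Pi.sub_apply, Pi.div_apply, Pi.ofNat_apply, two_nsmul]
    linarith [hεi i]

end ChainProfile

theorem Implements.apply_chainProfile {n : ℕ} {A : Type*} [DecidableEq A]
    {f : Profile n A → A} {p : Profile n A → Fin n → ℝ} (hp : Implements f p)
    {a b c : A} (hab : a ≠ b) (hbc : b ≠ c) (hac : a ≠ c)
    {β α : Fin n → ℝ} (hβ : β ∈ RPSet f a b) (hα : α ∈ RPSet f b c)
    {u : Profile n A} (hu : f u = a) {δ : Fin n → ℝ} (hδ : StrongLT 0 δ) :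
    f (chainProfile a b c β α u δ) = a := by
  obtain ⟨t, hat, rfl⟩ := hβ
  obtain ⟨s, hbs, rfl⟩ := hα
  have hδi (i : Fin n) : 0 < δ i := hδ i
  have hx := hp.apply_mem_choiceSet (chainProfile a b c (t a - t b) (s b - s c) u δ)
  generalize f (chainProfile _ _ _ _ _ _ _) = x at hx ⊢
  by_contra hxa
  by_cases hxb : x = b
  · subst hxb
    refine hp.not_strongLT_of_mem_choiceSet hab hat hx ?_
    rw [chainProfile_sub_chainProfile_left _ _ _ _ hab]
    exact fun i => lt_add_of_pos_right _ (hδi i)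
  by_cases hxc : x = c
  · subst hxc
    refine hp.not_strongLT_of_mem_choiceSet hbc hbs hx ?_
    rw [chainProfile_sub_chainProfile_right _ _ _ _ hab hbc hac]
    exact fun i => lt_add_of_pos_right _ (hδi i)
  · refine hp.not_strongLT_of_mem_choiceSet (Ne.symm hxa) (hu ▸ hp.apply_mem_choiceSet u) hx ?_
    rw [chainProfile_sub_chainProfile_of_ne _ _ _ _ hxa hxb hxc]
    exact fun i => lt_add_of_pos_right _ (nsmul_pos (hδi i) two_ne_zero)

theorem pset_additive_general
    {n : ℕ} {A : Type*} [DecidableEq A]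
    (f : Profile n A → A)
    (hf : Implementable f) (hni : NonImposition f)
    (a b c : A) (hab : a ≠ b) (hbc : b ≠ c) (hac : a ≠ c)
    (β α : Fin n → ℝ)
    (hβ : β ∈ RPSet f a b) (hα : α ∈ RPSet f b c) :
    β + α ∈ RPSet f a c := by
  obtain ⟨p, hp⟩ := hf
  obtain ⟨u, hu⟩ := hni a
  refine ⟨chainProfile a b c β α u 0, hp.mem_choiceSet_of_forall_apply_eq fun ε hε =>
    ⟨_, hp.apply_chainProfile hab hbc hac hβ hα hu fun i => div_pos (hε i) three_pos,
      fun y hy => chainProfile_sub_chainProfile_lt β α u hab hbc hac hε hy⟩, ?_⟩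
  simpa using chainProfile_sub_chainProfile_outer β α u 0 hac hbc

/-- for pairwise distinct `a, b, c`, if `β ∈ P^f(a,b)` and
`α ∈ P^f(b,c)`, then `β + α ∈ P^f(a,c)`. -/
theorem pset_additive
    {n : ℕ} {A : Type*} [Fintype A] [DecidableEq A]
    (hn : 0 < n) (hA : 3 ≤ Fintype.card A)
    (f : Profile n A → A)
    (hf : Implementable f) (hni : NonImposition f)
    (a b c : A) (hab : a ≠ b) (hbc : b ≠ c) (hac : a ≠ c)
    (β α : Fin n → ℝ)
    (hβ : β ∈ RPSet f a b) (hα : α ∈ RPSet f b c) :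
    β + α ∈ RPSet f a c :=
  pset_additive_general f hf hni a b c hab hbc hac β α hβ hα
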